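/- arXiv:1911.10173 — 5 statements merged into one kernel-verified Lean document; each statement's English description precedes it below -/
import Mathlib

section
/- For any positive reciprocal n×n matrix C with n ≥ 3, the Koczkodaj inconsistency index satisfies 0 ≤ KI(C) < 1. -/
/-- Koczkodaj's inconsistency index. -/
noncomputable def KI {n : ℕ} (hn : 0 < n) (C : Fin n → Fin n → ℝ) : ℝ :=
  Finset.sup' (Finset.univ : Finset (Fin n × Fin n × Fin n))
    (by haveI : NeZero n := ⟨hn.ne'⟩; exact Finset.univ_nonempty)
    (fun t => min |1 - C t.1 t.2.1 / (C t.1 t.2.2 * C t.2.2 t.2.1)|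
                  |1 - (C t.1 t.2.2 * C t.2.2 t.2.1) / C t.1 t.2.1|)

lemma min_abs_lt_one {p q : ℝ} (hp : 0 < p) (hq : 0 < q) :
    min |1 - p / q| |1 - q / p| < 1 := by
  rcases le_total p q with h | h
  · apply lt_of_le_of_lt (min_le_left _ _)
    rw [abs_of_nonneg (by rw [sub_nonneg]; exact div_le_one_of_le₀ h hq.le)]
    have : 0 < p / q := div_pos hp hq
    linarith
  · apply lt_of_le_of_lt (min_le_right _ _)
    rw [abs_of_nonneg (by rw [sub_nonneg]; exact div_le_one_of_le₀ h hp.le)]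
    have : 0 < q / p := div_pos hq hp
    linarith

theorem KI_nonneg_lt_one {n : ℕ} (hn : 3 ≤ n) (C : Fin n → Fin n → ℝ)
    (hpos : ∀ i j, 0 < C i j)
    (hrecip : ∀ i j, C i j = 1 / C j i) :
    0 ≤ KI (by omega) C ∧ KI (by omega) C < 1 := by
  constructor
  · have h0 : (0:ℕ) < n := by omega
    haveI : NeZero n := ⟨h0.ne'⟩
    refine le_trans ?_ (Finset.le_sup' _ (Finset.mem_univ (⟨0,0,0⟩ : Fin n × Fin n × Fin n)))
    exact le_min (abs_nonneg _) (abs_nonneg _)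
  · rw [KI, Finset.sup'_lt_iff]
    intro t _
    exact min_abs_lt_one (hpos _ _) (mul_pos (hpos _ _) (hpos _ _))
end

section
/- Let C be a positive reciprocal n×n matrix with Koczkodaj inconsistency index KI < 1, and let w be the priority vector from the geometric mean method. Then for all i,j: c_ij > 1/(1 − KI) implies w_i > w_j. -/
/-- Geometric mean method priority vector. -/
noncomputable def gmw {n : ℕ} (C : Fin n → Fin n → ℝ) (i : Fin n) : ℝ :=
  (∏ r, C i r) ^ ((1 : ℝ) / n)

theorem POP_of_KI_bound {n : ℕ} (hn : 0 < n) (C : Fin n → Fin n → ℝ)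
    (hpos : ∀ i j, 0 < C i j)
    (hrecip : ∀ i j, C i j = 1 / C j i)
    (hKI : KI hn C < 1) :
    ∀ i j, 1 / (1 - KI hn C) < C i j → gmw C j < gmw C i := by
  haveI : NeZero n := ⟨hn.ne'⟩
  intro i j hij
  set K := KI hn C with hKdef
  have hK0 : 0 ≤ K := by
    have h := Finset.le_sup' (b := ((i, i, i) : Fin n × Fin n × Fin n))
      (fun t : Fin n × Fin n × Fin n =>
        min |1 - C t.1 t.2.1 / (C t.1 t.2.2 * C t.2.2 t.2.1)|
            |1 - (C t.1 t.2.2 * C t.2.2 t.2.1) / C t.1 t.2.1|)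
      (Finset.mem_univ _)
    exact le_trans (le_min (abs_nonneg _) (abs_nonneg _)) h
  have h1K : 0 < 1 - K := by linarith
  have hq0 : 0 < C i j := hpos i j
  have hq : 1 < C i j * (1 - K) := (div_lt_iff₀ h1K).mp hij
  have key : ∀ k, 1 < C i k * C k j := by
    intro k
    have hmin : min |1 - C i j / (C i k * C k j)| |1 - (C i k * C k j) / C i j| ≤ K :=
      Finset.le_sup' (b := ((i, j, k) : Fin n × Fin n × Fin n))
        (fun t : Fin n × Fin n × Fin n =>
          min |1 - C t.1 t.2.1 / (C t.1 t.2.2 * C t.2.2 t.2.1)|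
              |1 - (C t.1 t.2.2 * C t.2.2 t.2.1) / C t.1 t.2.1|)
        (Finset.mem_univ _)
    have hp : 0 < C i k * C k j := mul_pos (hpos i k) (hpos k j)
    rcases le_total (|1 - (C i k * C k j) / C i j|) (|1 - C i j / (C i k * C k j)|) with h | h
    · have h2 : |1 - (C i k * C k j) / C i j| ≤ K := by
        rwa [min_eq_right h] at hmin
      rw [abs_le] at h2
      have h4 : 1 - K ≤ C i k * C k j / C i j := by linarith [h2.2]
      have h3 : (1 - K) * C i j ≤ C i k * C k j := by
        calc (1 - K) * C i j ≤ C i k * C k j / C i j * C i j :=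
              mul_le_mul_of_nonneg_right h4 hq0.le
        _ = C i k * C k j := by field_simp
      nlinarith
    · have h2 : |1 - C i j / (C i k * C k j)| ≤ K := by
        rwa [min_eq_left h] at hmin
      rw [abs_le] at h2
      have h3 : C i j ≤ (1 + K) * (C i k * C k j) := by
        have h4 : C i j / (C i k * C k j) ≤ 1 + K := by linarith [h2.2]
        calc C i j = C i j / (C i k * C k j) * (C i k * C k j) := by field_simp; exact (div_self hp.ne').symm
        _ ≤ (1 + K) * (C i k * C k j) := by
            exact mul_le_mul_of_nonneg_right h4 hp.le
    
      nlinarith [sq_nonneg K, mul_pos hq0 h1K]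
  have hprodpos : ∀ a : Fin n, 0 < ∏ r, C a r := fun a =>
    Finset.prod_pos (fun r _ => hpos a r)
  have h1 : (1 : ℝ) < ∏ r, C i r * C r j := by
    have h := Finset.prod_lt_prod_of_nonempty (f := fun _ : Fin n => (1 : ℝ))
      (g := fun r => C i r * C r j) (fun r _ => one_pos) (fun r _ => key r)
      Finset.univ_nonempty
    simpa using h
  have heq : ∏ r, C i r = (∏ r, C i r * C r j) * ∏ r, C j r := by
    rw [← Finset.prod_mul_distrib]
    apply Finset.prod_congr rfl
    intro r _
    have hr := hrecip r j
    have : C j r ≠ 0 := (hpos j r).ne'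
    rw [hr]
    field_simp
  have hprod : ∏ r, C j r < ∏ r, C i r := by
    rw [heq]
    exact (lt_mul_iff_one_lt_left (hprodpos j)).mpr h1
  have hn' : (0 : ℝ) < (1 : ℝ) / n := by positivity
  exact Real.rpow_lt_rpow (hprodpos j).le hprod hn'
end

section
/- Let C be a positive reciprocal n×n matrix with Koczkodaj inconsistency index KI < 1, and let w be the geometric-mean priority vector. Then for all indices i,j,k,l: c_ij/c_kl > (1/(1 − KI))^2 implies w_i/w_j > w_k/w_l. -/
lemma scalar_bounds (x κ : ℝ) (hx : 0 < x) (hκ0 : 0 ≤ κ) (hκ1 : κ < 1)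
    (h : min |1 - x| |1 - 1/x| ≤ κ) : 1 - κ ≤ x ∧ x ≤ 1 / (1 - κ) := by
  have hx1 : (1:ℝ)/x * x = 1 := div_mul_cancel₀ 1 hx.ne'
  have h1κ : 0 < 1 - κ := by linarith
  rcases min_le_iff.mp h with h | h
  · rw [abs_le] at h
    constructor
    · linarith
    · rw [le_div_iff₀ h1κ]; nlinarith
  · rw [abs_le] at h
    have hix : 0 < 1/x := by positivity
    constructor
    · nlinarith
    · rw [le_div_iff₀ h1κ]; nlinarith

theorem POIP_of_KI_bound {n : ℕ} (hn : 0 < n) (C : Fin n → Fin n → ℝ)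
    (hpos : ∀ i j, 0 < C i j)
    (hrecip : ∀ i j, C i j = 1 / C j i)
    (hKI : KI hn C < 1) :
    ∀ i j k l, (1 / (1 - KI hn C)) ^ 2 < C i j / C k l →
      gmw C k / gmw C l < gmw C i / gmw C j := by
  have htriple : ∀ i j r : Fin n,
      min |1 - C i j / (C i r * C r j)| |1 - (C i r * C r j) / C i j| ≤ KI hn C := by
    intro i j r
    unfold KI
    exact Finset.le_sup'
      (fun t => min |1 - C t.1 t.2.1 / (C t.1 t.2.2 * C t.2.2 t.2.1)|
                    |1 - (C t.1 t.2.2 * C t.2.2 t.2.1) / C t.1 t.2.1|)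
      (Finset.mem_univ (i, j, r))
  have hκ0 : 0 ≤ KI hn C :=
    le_trans (le_min (abs_nonneg _) (abs_nonneg _)) (htriple ⟨0, hn⟩ ⟨0, hn⟩ ⟨0, hn⟩)
  set κ := KI hn C with hκdef
  have h1κ : 0 < 1 - κ := by linarith
  -- per-entry bound on ratios
  have hratio : ∀ i j r : Fin n,
      (1 - κ) * C i j ≤ C i r / C j r ∧ C i r / C j r ≤ C i j / (1 - κ) := by
    intro i j r
    have hy : 0 < C i r * C r j := mul_pos (hpos i r) (hpos r j)
    have hx : 0 < C i j / (C i r * C r j) := div_pos (hpos i j) hy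
    have ht := htriple i j r
    rw [show (C i r * C r j) / C i j = 1 / (C i j / (C i r * C r j)) from
      (one_div_div _ _).symm] at ht
    obtain ⟨h1, h2⟩ := scalar_bounds _ κ hx hκ0 hKI ht
    have heq : C i r * C r j = C i r / C j r := by
      rw [hrecip r j]; ring
    rw [heq] at h1 h2
    have hd : 0 < C i r / C j r := by rw [← heq]; exact hy
    constructor
    · -- from h2 : C i j / d ≤ 1/(1-κ)
      rw [div_le_div_iff₀ hd h1κ] at h2
      nlinarith
    · -- from h1 : 1-κ ≤ C i j / d
      rw [le_div_iff₀ hd] at h1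
      rw [le_div_iff₀ h1κ]
      nlinarith
  -- gmw ratio equals rpow of product of ratios
  have hgm : ∀ i j : Fin n,
      gmw C i / gmw C j = (∏ r, C i r / C j r) ^ ((1:ℝ)/n) := by
    intro i j
    have h1 : (0:ℝ) ≤ ∏ r, C i r := Finset.prod_nonneg fun r _ => (hpos i r).le
    rw [gmw, gmw, ← Real.div_rpow h1 (Finset.prod_nonneg fun r _ => (hpos j r).le),
      Finset.prod_div_distrib]
  -- rpow of nth power
  have hnR : (0:ℝ) < n := by exact_mod_cast hn
  have hpow : ∀ a : ℝ, 0 < a → (a ^ n) ^ ((1:ℝ)/n) = a := by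
    intro a ha
    rw [← Real.rpow_natCast a n, ← Real.rpow_mul ha.le,
      mul_one_div, div_self hnR.ne', Real.rpow_one]
  have hbound : ∀ i j : Fin n,
      (1 - κ) * C i j ≤ gmw C i / gmw C j ∧ gmw C i / gmw C j ≤ C i j / (1 - κ) := by
    intro i j
    have hlb : ((1 - κ) * C i j) ^ n ≤ ∏ r, C i r / C j r := by
      calc ((1 - κ) * C i j) ^ n = ∏ _r : Fin n, (1 - κ) * C i j := by
            rw [Finset.prod_const, Finset.card_univ, Fintype.card_fin]
        _ ≤ ∏ r, C i r / C j r :=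
            Finset.prod_le_prod (fun r _ => (mul_pos h1κ (hpos i j)).le) (fun r _ => (hratio i j r).1)
    have hub : (∏ r, C i r / C j r) ≤ (C i j / (1 - κ)) ^ n := by
      calc (∏ r, C i r / C j r) ≤ ∏ _r : Fin n, C i j / (1 - κ) :=
            Finset.prod_le_prod (fun r _ => (div_pos (hpos i r) (hpos j r)).le) (fun r _ => (hratio i j r).2)
        _ = (C i j / (1 - κ)) ^ n := by
            rw [Finset.prod_const, Finset.card_univ, Fintype.card_fin]
    have hexp : (0:ℝ) ≤ 1/n := by positivity
    constructor
    · rw [hgm, ← hpow _ (mul_pos h1κ (hpos i j))]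
      exact Real.rpow_le_rpow (pow_nonneg (mul_pos h1κ (hpos i j)).le n) hlb hexp
    · rw [hgm, ← hpow _ (div_pos (hpos i j) h1κ)]
      exact Real.rpow_le_rpow
        (Finset.prod_nonneg fun r _ => (div_pos (hpos i r) (hpos j r)).le) hub hexp
  intro i j k l h
  have hkl : 0 < C k l := hpos k l
  have h' : C k l / (1 - κ) < (1 - κ) * C i j := by
    rw [div_lt_iff₀ h1κ]
    rw [div_pow, one_pow, lt_div_iff₀ (hpos k l)] at h
    have hsq : 0 < (1 - κ) ^ 2 := by positivity
    have h2 : C k l < C i j * (1 - κ) ^ 2 := by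
      have h3 := mul_lt_mul_of_pos_right h hsq
      calc C k l = 1 / (1 - κ) ^ 2 * C k l * (1 - κ) ^ 2 := by field_simp
        _ < C i j * (1 - κ) ^ 2 := h3
    nlinarith [h2]
  calc gmw C k / gmw C l ≤ C k l / (1 - κ) := (hbound k l).2
    _ < (1 - κ) * C i j := h'
    _ ≤ gmw C i / gmw C j := (hbound i j).1
end

section
/- Let C be a positive reciprocal matrix obtained by perturbing a consistent matrix: c_ij = (v_i/v_j)·δ_ij with δ_ij ∈ [1/γ, γ], δ_ji = 1/δ_ij, for some γ ≥ 1 and positive vector v. Then for every triple (i,j,k), the ratio c_ij/(c_ik·c_kj) lies in [γ^{-3}, γ^{3}], and hence KI(C) ≤ 1 − γ^{-3}. -/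
theorem KI_bound_of_perturbation {n : ℕ} (hn : 0 < n)
    (v : Fin n → ℝ) (hv : ∀ i, 0 < v i)
    (γ : ℝ) (hγ : 1 ≤ γ)
    (δ : Fin n → Fin n → ℝ)
    (hδmem : ∀ i j, δ i j ∈ Set.Icc (1 / γ) γ)
    (hδrecip : ∀ i j, δ j i = 1 / δ i j)
    (C : Fin n → Fin n → ℝ)
    (hC : ∀ i j, C i j = v i / v j * δ i j) :
    (∀ i j k, C i j / (C i k * C k j) ∈ Set.Icc (γ ^ (3 : ℕ))⁻¹ (γ ^ (3 : ℕ))) ∧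
    KI hn C ≤ 1 - (γ ^ (3 : ℕ))⁻¹ := by
  have hγ0 : (0:ℝ) < γ := lt_of_lt_of_le one_pos hγ
  have hδpos : ∀ i j, 0 < δ i j := fun i j =>
    lt_of_lt_of_le (by positivity) (hδmem i j).1
  have hCpos : ∀ i j, 0 < C i j := by
    intro i j
    rw [hC]
    have := hv i; have := hv j; have := hδpos i j
    positivity
  have hratio : ∀ i j k, C i j / (C i k * C k j)
      ∈ Set.Icc (γ ^ (3 : ℕ))⁻¹ (γ ^ (3 : ℕ)) := by
    intro i j k
    have hvi := hv i; have hvj := hv j; have hvk := hv k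
    have key : C i j / (C i k * C k j) = δ i j / (δ i k * δ k j) := by
      have h1 := hvi.ne'; have h2 := hvj.ne'; have h3 := hvk.ne'
      have h4 := (hδpos i k).ne'; have h5 := (hδpos k j).ne'
      rw [hC, hC, hC]
      field_simp
    rw [key]
    obtain ⟨h1, h2⟩ := hδmem i j
    obtain ⟨h3, h4⟩ := hδmem i k
    obtain ⟨h5, h6⟩ := hδmem k j
    have hik := hδpos i k; have hkj := hδpos k j; have hij := hδpos i j
    constructor
    · calc (γ ^ (3:ℕ))⁻¹ = (1/γ) / (γ * γ) := by field_simp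
        _ ≤ δ i j / (δ i k * δ k j) :=
          div_le_div₀ hij.le h1 (by positivity) (mul_le_mul h4 h6 hkj.le hγ0.le)
    · calc δ i j / (δ i k * δ k j)
          ≤ γ / ((1/γ) * (1/γ)) :=
            div_le_div₀ hγ0.le h2 (by positivity) (mul_le_mul h3 h5 (by positivity) hik.le)
        _ = γ ^ (3:ℕ) := by field_simp
  refine ⟨hratio, ?_⟩
  apply Finset.sup'_le
  intro t _
  obtain ⟨i, j, k⟩ := t
  simp only
  set x := C i j / (C i k * C k j) with hx
  obtain ⟨hxl, hxu⟩ := hratio i j k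
  have hx0 : 0 < x := lt_of_lt_of_le (by positivity) hxl
  have hinv : (C i k * C k j) / C i j = x⁻¹ := by
    rw [hx, inv_div]
  rcases le_total x 1 with h | h
  · refine le_trans (min_le_left _ _) ?_
    rw [abs_of_nonneg (by linarith)]
    linarith
  · refine le_trans (min_le_right _ _) ?_
    rw [hinv]
    have hinvle : x⁻¹ ≤ 1 := inv_le_one_of_one_le₀ h
    have hinvge : (γ ^ (3:ℕ))⁻¹ ≤ x⁻¹ := by
      apply inv_anti₀ hx0 hxu
    rw [abs_of_nonneg (by linarith)]
    linarith
end

section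
/- Let C be a positive reciprocal n×n matrix with KI(C) = κ < 1 and geometric-mean weights w. Then for all i,j: w_i/w_j ≥ c_ij·(1 − κ) and w_i/w_j ≤ c_ij/(1 − κ). -/
private lemma key_bound (κ a b : ℝ) (ha : 0 < a) (hb : 0 < b)
    (h : min |1 - b / a| |1 - a / b| ≤ κ) (hκ1 : κ < 1) (hκ0 : 0 ≤ κ) :
    b * (1 - κ) ≤ a ∧ a ≤ b / (1 - κ) := by
  have h1 : (0:ℝ) < 1 - κ := by linarith
  rcases min_le_iff.mp h with h' | h'
  · obtain ⟨l, r⟩ := abs_le.mp h'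
    have hba1 : b / a ≤ 1 + κ := by linarith
    have hba2 : 1 - κ ≤ b / a := by linarith
    have hb1 : b ≤ (1 + κ) * a := (div_le_iff₀ ha).mp hba1
    have hb2 : (1 - κ) * a ≤ b := (le_div_iff₀ ha).mp hba2
    constructor
    · nlinarith [sq_nonneg κ]
    · rw [le_div_iff₀ h1]; linarith
  · obtain ⟨l, r⟩ := abs_le.mp h'
    have hab1 : a / b ≤ 1 + κ := by linarith
    have hab2 : 1 - κ ≤ a / b := by linarith
    have ha1 : a ≤ (1 + κ) * b := (div_le_iff₀ hb).mp hab1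
    have ha2 : (1 - κ) * b ≤ a := (le_div_iff₀ hb).mp hab2
    refine ⟨by linarith, ?_⟩
    rw [le_div_iff₀ h1]
    nlinarith [sq_nonneg κ]

theorem gmw_ratio_bounds_of_KI {n : ℕ} (hn : 0 < n) (C : Fin n → Fin n → ℝ)
    (hpos : ∀ i j, 0 < C i j)
    (hrecip : ∀ i j, C i j = 1 / C j i)
    (κ : ℝ) (hκ : KI hn C = κ) (hκ1 : κ < 1) :
    ∀ i j, C i j * (1 - κ) ≤ gmw C i / gmw C j ∧
      gmw C i / gmw C j ≤ C i j / (1 - κ) := by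
  haveI : NeZero n := ⟨hn.ne'⟩
  set f : Fin n × Fin n × Fin n → ℝ :=
    fun t => min |1 - C t.1 t.2.1 / (C t.1 t.2.2 * C t.2.2 t.2.1)|
                 |1 - (C t.1 t.2.2 * C t.2.2 t.2.1) / C t.1 t.2.1| with hf
  have hle : ∀ t : Fin n × Fin n × Fin n, f t ≤ κ := by
    intro t
    rw [← hκ]
    exact Finset.le_sup' f (Finset.mem_univ t)
  have hκ0 : 0 ≤ κ := by
    have i0 : Fin n := ⟨0, hn⟩
    refine le_trans ?_ (hle (i0, i0, i0))
    exact le_min (abs_nonneg _) (abs_nonneg _)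
  intro i j
  have h1 : (0:ℝ) < 1 - κ := by linarith
  -- per-r bounds
  have hterm : ∀ r, C i j * (1 - κ) ≤ C i r * C r j ∧ C i r * C r j ≤ C i j / (1 - κ) := by
    intro r
    exact key_bound κ (C i r * C r j) (C i j)
      (mul_pos (hpos i r) (hpos r j)) (hpos i j) (hle (i, j, r)) hκ1 hκ0
  set P : ℝ := ∏ r, C i r * C r j with hP
  have hPlb : (C i j * (1 - κ)) ^ n ≤ P := by
    calc (C i j * (1 - κ)) ^ n = ∏ _r : Fin n, (C i j * (1 - κ)) := by
          simp [Finset.prod_const]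
      _ ≤ P := Finset.prod_le_prod (fun r _ => mul_nonneg (hpos i j).le h1.le) (fun r _ => (hterm r).1)
  have hPub : P ≤ (C i j / (1 - κ)) ^ n := by
    calc P ≤ ∏ _r : Fin n, (C i j / (1 - κ)) :=
          Finset.prod_le_prod (fun r _ => (mul_pos (hpos i r) (hpos r j)).le)
            (fun r _ => (hterm r).2)
      _ = (C i j / (1 - κ)) ^ n := by simp [Finset.prod_const, div_pow]
  -- gmw ratio equals P ^ (1/n)
  have hprodpos : ∀ k : Fin n, (0:ℝ) < ∏ r, C k r :=
    fun k => Finset.prod_pos (fun r _ => hpos k r)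
  have hratio : gmw C i / gmw C j = P ^ ((1:ℝ)/n) := by
    rw [gmw, gmw, ← Real.div_rpow (hprodpos i).le (hprodpos j).le]
    congr 1
    rw [hP, ← Finset.prod_div_distrib]
    refine Finset.prod_congr rfl fun r _ => ?_
    rw [hrecip j r]
    field_simp
  have hinv : (1:ℝ)/n = ((n:ℝ))⁻¹ := one_div _
  have hPpos : 0 < P := Finset.prod_pos (fun r _ => mul_pos (hpos i r) (hpos r j))
  constructor
  · rw [hratio]
    calc C i j * (1 - κ) = ((C i j * (1 - κ)) ^ n) ^ ((1:ℝ)/n) := by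
          rw [hinv, Real.pow_rpow_inv_natCast (mul_nonneg (hpos i j).le h1.le) hn.ne']
      _ ≤ P ^ ((1:ℝ)/n) := Real.rpow_le_rpow (pow_nonneg (mul_nonneg (hpos i j).le h1.le) n) hPlb (by positivity)
  · rw [hratio]
    calc P ^ ((1:ℝ)/n) ≤ ((C i j / (1 - κ)) ^ n) ^ ((1:ℝ)/n) :=
          Real.rpow_le_rpow hPpos.le hPub (by positivity)
      _ = C i j / (1 - κ) := by
          rw [hinv, Real.pow_rpow_inv_natCast (div_nonneg (hpos i j).le h1.le) hn.ne']
end
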